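/- arXiv:2601.04743 — 3 statements merged into one kernel-verified Lean document; each statement's English description precedes it below -/
import Mathlib

section
/- The sequence B_k defined by B_0 = 0, B_1 = 1, and B_k = -4*B_{k-1} - 8*B_{k-2} + (8^k - 1)/7 for k ≥ 2 satisfies B_{4m+3} = (8^{4m+4} - 1)/91 for all integers m ≥ 0. -/
/-- The integer sequence `B` with `B 0 = 0`, `B 1 = 1`, and
`B k = -4 * B (k-1) - 8 * B (k-2) + (8^k - 1)/7` for `k ≥ 2`. -/
def B : ℕ → ℤ
  | 0 => 0
  | 1 => 1
  | (k+2) => -4 * B (k+1) - 8 * B k + ((8:ℤ)^(k+2) - 1)/7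

lemma B_rec (k : ℕ) : B (k+2) = -4 * B (k+1) - 8 * B k + ((8:ℤ)^(k+2) - 1)/7 := rfl

lemma dvd7 (k : ℕ) : (7:ℤ) ∣ 8^k - 1 := by
  have h : (8:ℤ)^k ≡ 1^k [ZMOD 7] := Int.ModEq.pow k (by decide)
  have := h.dvd
  simpa [dvd_sub_comm] using this

lemma div7 (k : ℕ) : ((8:ℤ)^k - 1)/7 * 7 = 8^k - 1 :=
  Int.ediv_mul_cancel (dvd7 k)

lemma key (m : ℕ) :
    91 * B (4*m) = 8^(4*m+1) - 1 - 7*(-64)^m ∧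
    91 * B (4*m+1) = 8^(4*m+2) - 1 + 28*(-64)^m ∧
    91 * B (4*m+2) = 8^(4*m+3) - 1 - 56*(-64)^m ∧
    91 * B (4*m+3) = 8^(4*m+4) - 1 := by
  induction m with
  | zero =>
    refine ⟨by norm_num [B], by norm_num [B], by norm_num [B], by norm_num [B]⟩
  | succ n ih =>
    obtain ⟨h0, h1, h2, h3⟩ := ih
    have e : ∀ j : ℕ, 91 * B (j+2) = -4 * (91 * B (j+1)) - 8 * (91 * B j)
        + 13 * (((8:ℤ)^(j+2) - 1)/7 * 7) := by
      intro j
      rw [B_rec j]; ring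
    have r0 : 91 * B (4*(n+1)) = 8^(4*(n+1)+1) - 1 - 7*(-64)^(n+1) := by
      have := e (4*n+2)
      rw [div7] at this
      have eq1 : 4*(n+1) = 4*n+2+2 := by ring
      rw [eq1, this, h3, h2]
      have : 4*n+2+2 = 4*n+4 := by ring
      rw [this]
      ring
    have r1 : 91 * B (4*(n+1)+1) = 8^(4*(n+1)+2) - 1 + 28*(-64)^(n+1) := by
      have := e (4*n+3)
      rw [div7] at this
      have eq1 : 4*(n+1)+1 = 4*n+3+2 := by ring
      rw [eq1, this]
      have eq2 : 4*n+3+1 = 4*(n+1) := by ring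
      rw [eq2, r0, h3]
      have : 4*n+3+2 = 4*n+5 := by ring
      rw [this]
      ring
    have r2 : 91 * B (4*(n+1)+2) = 8^(4*(n+1)+3) - 1 - 56*(-64)^(n+1) := by
      have := e (4*(n+1))
      rw [div7] at this
      rw [this, r1, r0]
      ring
    have r3 : 91 * B (4*(n+1)+3) = 8^(4*(n+1)+4) - 1 := by
      have := e (4*(n+1)+1)
      rw [div7] at this
      rw [show 4*(n+1)+3 = 4*(n+1)+1+2 by ring, this,
        show 4*(n+1)+1+1 = 4*(n+1)+2 by ring, r2, r1]
      ring
    exact ⟨r0, r1, r2, r3⟩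

theorem stmt_0 (m : ℕ) : B (4*m+3) = ((8:ℤ)^(4*m+4) - 1)/91 := by
  have h := (key m).2.2.2
  rw [← h, Int.mul_ediv_cancel_left _ (by norm_num)]
end

section
/- The sequence B_k (with B_0 = 0, B_1 = 1, B_k = -4*B_{k-1} - 8*B_{k-2} + (8^k-1)/7) satisfies B_{4m+7} + 64*B_{4m+3} = 5*(8^{4m+6} - 1)/7 for all integers m ≥ 0. -/
/-!
Since `X⁴ + 64 = (X² + 4X + 8)(X² - 4X + 8)` and `X² + 4X + 8` is the characteristic polynomial
of the recursion, applying the shift operator `E⁴ + 64` to `B` kills the homogeneous part and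
leaves `E² - 4E + 8` applied to the forcing term `(8ᵏ - 1)/7`, which is `5 (8^(k+3) - 1)/7`.
-/

theorem add_four_add_sixty_four_mul_of_forced_recurrence {R : Type*} [CommRing R] {u f : ℕ → R}
    (h : ∀ k, u (k + 2) = -4 * u (k + 1) - 8 * u k + f (k + 2)) (k : ℕ) :
    u (k + 4) + 64 * u k = f (k + 4) - 4 * f (k + 3) + 8 * f (k + 2) := by
  linear_combination h (k + 2) - 4 * h (k + 1) + 8 * h k

theorem seven_mul_eight_pow_sub_one_div_seven (n : ℕ) : 7 * (((8 : ℤ) ^ n - 1) / 7) = 8 ^ n - 1 :=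
  Int.mul_ediv_cancel' (by simpa using sub_dvd_pow_sub_pow (8 : ℤ) 1 n)

theorem eight_pow_sub_one_div_seven_shift_combination (k : ℕ) :
    ((8 : ℤ) ^ (k + 4) - 1) / 7 - 4 * (((8 : ℤ) ^ (k + 3) - 1) / 7)
      + 8 * (((8 : ℤ) ^ (k + 2) - 1) / 7) = 5 * (((8 : ℤ) ^ (k + 3) - 1) / 7) := by
  refine mul_left_cancel₀ (by norm_num : (7 : ℤ) ≠ 0) ?_
  linear_combination seven_mul_eight_pow_sub_one_div_seven (k + 4)
    - 9 * seven_mul_eight_pow_sub_one_div_seven (k + 3)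
    + 8 * seven_mul_eight_pow_sub_one_div_seven (k + 2)

theorem B_add_four_add_sixty_four_mul (k : ℕ) :
    B (k + 4) + 64 * B k = 5 * (((8 : ℤ) ^ (k + 3) - 1) / 7) := by
  rw [add_four_add_sixty_four_mul_of_forced_recurrence (f := fun n ↦ ((8 : ℤ) ^ n - 1) / 7)
    (fun k ↦ rfl) k]
  exact eight_pow_sub_one_div_seven_shift_combination k

theorem stmt_1 (m : ℕ) :
    B (4*m+7) + 64 * B (4*m+3) = 5 * (((8:ℤ)^(4*m+6) - 1)/7) :=
  B_add_four_add_sixty_four_mul (4 * m + 3)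
end

section
/- Let A = (1 - 4X - X^2)/(1 - X^2) and B = (1 - 4Y - Y^2)/(1 - Y^2), where X, Y satisfy the relation X^2 - Y + 2XY + X^2Y + Y^2 = 0 (with appropriate nonvanishing hypotheses). Then A^2 + 4AB + B^2 - 5A - A*B^2 = 0. -/
/-! Clearing the denominators `(1 - X^2)^2 (1 - Y^2)^2`, the relation between `A` and `B`
becomes a polynomial identity in `X` and `Y`, and that polynomial is a multiple of
`X^2 - Y + 2XY + X^2Y + Y^2`. -/

theorem cleared_relation_eq_mul {R : Type*} [CommRing R] (X Y : R) :
    (1 - 4*X - X^2)^2 * (1 - Y^2)^2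
      + 4 * (1 - 4*X - X^2) * (1 - 4*Y - Y^2) * (1 - X^2) * (1 - Y^2)
      + (1 - 4*Y - Y^2)^2 * (1 - X^2)^2
      - 5 * (1 - 4*X - X^2) * (1 - X^2) * (1 - Y^2)^2
      - (1 - 4*X - X^2) * (1 - 4*Y - Y^2)^2 * (1 - X^2)
      = 16 * (1 + Y - 2*X*Y - X^2*Y + X^2*Y^2) * (X^2 - Y + 2*X*Y + X^2*Y + Y^2) := by
  ring

theorem stmt_3_general {K : Type*} [Field K] (X Y : K)
    (hX2 : 1 - X^2 ≠ 0) (hY2 : 1 - Y^2 ≠ 0)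
    (hrel : X^2 - Y + 2*X*Y + X^2*Y + Y^2 = 0) :
    ((1 - 4*X - X^2)/(1 - X^2))^2
      + 4 * ((1 - 4*X - X^2)/(1 - X^2)) * ((1 - 4*Y - Y^2)/(1 - Y^2))
      + ((1 - 4*Y - Y^2)/(1 - Y^2))^2
      - 5 * ((1 - 4*X - X^2)/(1 - X^2))
      - ((1 - 4*X - X^2)/(1 - X^2)) * ((1 - 4*Y - Y^2)/(1 - Y^2))^2 = 0 := by
  have hcleared := cleared_relation_eq_mul X Y
  rw [hrel, mul_zero] at hcleared
  field_simp
  linear_combination hcleared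

theorem stmt_3 {K : Type*} [Field K] (X Y : K) (hX : X ≠ 0) (hY : Y ≠ 0)
    (hX2 : 1 - X^2 ≠ 0) (hY2 : 1 - Y^2 ≠ 0)
    (hA : 1 - (1 - 4*X - X^2)/(1 - X^2) ≠ 0)
    (hB : 1 - (1 - 4*Y - Y^2)/(1 - Y^2) ≠ 0)
    (hrel : X^2 - Y + 2*X*Y + X^2*Y + Y^2 = 0) :
    ((1 - 4*X - X^2)/(1 - X^2))^2
      + 4 * ((1 - 4*X - X^2)/(1 - X^2)) * ((1 - 4*Y - Y^2)/(1 - Y^2))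
      + ((1 - 4*Y - Y^2)/(1 - Y^2))^2
      - 5 * ((1 - 4*X - X^2)/(1 - X^2))
      - ((1 - 4*X - X^2)/(1 - X^2)) * ((1 - 4*Y - Y^2)/(1 - Y^2))^2 = 0 :=
  stmt_3_general X Y hX2 hY2 hrel
end
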